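/- Sharper alternative L-norm error bound: In the setting of the Aubin–Nitsche trick (L a real normed vector space, r_h : X_h → L linear, B the closed unit ball of continuous linear forms on L, u_h a solution of the discrete problem, I_h u ∈ X_h, for each g ∈ B an element J_g ∈ Y_h, dual consistency error D_g(x) = g(r_h x) − a_h(x, J_g), primal-dual consistency error E_h(u; J_g) = ℓ_h(J_g) − a_h(I_h u, J_g)), and assuming the suprema below are finite, it holds that ‖r_h(u_h − I_h u)‖_L ≤ sup_{g ∈ B} D_g(u_h − I_h u) + sup_{g ∈ B} E_h(u; J_g). -/

import Mathlib

/-! Since `u_h` solves the discrete problem, `a_h(u_h - I_h u, J_g) = E_h(u; J_g)`, so for every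
`g` in the closed unit ball of `L⋆` the value `g(r_h(u_h - I_h u))` splits as
`D_g(u_h - I_h u) + E_h(u; J_g)`, which is bounded by the sum of the two suprema. A norming
functional from Hahn–Banach turns this bound on `g(r_h(u_h - I_h u))` into one on the norm. -/

theorem norm_le_of_forall_dual_apply_le {E : Type*} [NormedAddCommGroup E] [NormedSpace ℝ E]
    {x : E} {c : ℝ} (h : ∀ g : StrongDual ℝ E, ‖g‖ ≤ 1 → g x ≤ c) : ‖x‖ ≤ c := by
  obtain ⟨g, hg, hgx⟩ := exists_dual_vector'' ℝ x
  calc ‖x‖ = g x := by simpa using hgx.symm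
    _ ≤ c := h g hg

theorem LinearMap.apply_sub_of_forall_apply_eq {R M N : Type*} [CommRing R]
    [AddCommGroup M] [Module R M] [AddCommGroup N] [Module R N]
    {a : M →ₗ[R] N →ₗ[R] R} {l : N →ₗ[R] R} {u : M} (hu : ∀ v, a u v = l v) (x : M) (v : N) :
    a (u - x) v = l v - a x v := by
  rw [map_sub, LinearMap.sub_apply, hu]

/-- Sharper alternative `L`-norm error bound in the Aubin–Nitsche setting. -/
theorem aubin_nitsche_sharper_estimate
    {X Y L : Type*} [NormedAddCommGroup X] [NormedSpace ℝ X]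
    [NormedAddCommGroup Y] [NormedSpace ℝ Y]
    [NormedAddCommGroup L] [NormedSpace ℝ L]
    (a : X →ₗ[ℝ] Y →ₗ[ℝ] ℝ) (l : Y →ₗ[ℝ] ℝ)
    (r : X →ₗ[ℝ] L)
    (Ihu : X) (uh : X) (huh : ∀ v : Y, a uh v = l v)
    (J : (L →L[ℝ] ℝ) → Y)
    (D : (L →L[ℝ] ℝ) → (X →L[ℝ] ℝ))
    (hD : ∀ (g : L →L[ℝ] ℝ) (x : X), D g x = g (r x) - a x (J g))
    (hbdd₁ : BddAbove
      (Set.range fun g : {g : L →L[ℝ] ℝ // ‖g‖ ≤ 1} => D g.1 (uh - Ihu)))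
    (hbdd₂ : BddAbove
      (Set.range fun g : {g : L →L[ℝ] ℝ // ‖g‖ ≤ 1} => l (J g.1) - a Ihu (J g.1))) :
    ‖r (uh - Ihu)‖ ≤
      (⨆ g : {g : L →L[ℝ] ℝ // ‖g‖ ≤ 1}, D g.1 (uh - Ihu))
        + ⨆ g : {g : L →L[ℝ] ℝ // ‖g‖ ≤ 1}, (l (J g.1) - a Ihu (J g.1)) := by
  refine norm_le_of_forall_dual_apply_le fun g hg => ?_
  have split : g (r (uh - Ihu)) = D g (uh - Ihu) + (l (J g) - a Ihu (J g)) := by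
    rw [hD, LinearMap.apply_sub_of_forall_apply_eq huh]
    ring
  rw [split]
  exact add_le_add (le_ciSup hbdd₁ ⟨g, hg⟩) (le_ciSup hbdd₂ ⟨g, hg⟩)
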